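/- Let n ≥ 2 be an integer, let γ ≥ λ > 0, and set α = (γ/λ)^{1/n}. Let I ⊆ ℝ be an open interval, let φ : I → ℝ be a positive C² function satisfying φ(β)(1 + (φ'(β)/(n−1))²)^{(n−1)/2} = 1/γ for all β ∈ I, and let u : I → ℝ be a continuous positive viscosity supersolution of ψ(1 + (ψ'/(n−1))²)^{(n−1)/2} = 1/λ on I. Then u/(αφ) cannot attain a local minimum value strictly less than 1 at any interior point: there is no β₀ ∈ I with u(β₀)/(αφ(β₀)) < 1 and u(β)/(αφ(β)) ≥ u(β₀)/(αφ(β₀)) for all β in a neighborhood of β₀. -/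

import Mathlib

/-!
If `u / (αφ)` had a local minimum value `< 1` at `β₀`, then `c φ` with `c = u(β₀) / φ(β₀) < α`
would touch `u` from below at `β₀`. Scaling a profile by `0 < c ≤ α` (with `α ≥ 1`) multiplies the
operator by at most `c α^(n-1)`, so the supersolution inequality for this test function gives
`1/λ ≤ c α^(n-1) / γ < α^n / γ = 1/λ`.
-/

open Filter

/-- `u` is a viscosity supersolution of `ψ(1 + (ψ'/(n−1))²)^((n−1)/2) = 1/λ` on `I`:
for every `β₀ ∈ I` and every `C²` test function `ψ` with `ψ ≤ u` near `β₀` (within `I`)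
and `ψ(β₀) = u(β₀)`, one has `ψ(β₀)(1 + (ψ'(β₀)/(n−1))²)^((n−1)/2) ≥ 1/λ`. -/
def IsViscositySupersolution1 (n : ℕ) (lam : ℝ) (I : Set ℝ) (u : ℝ → ℝ) : Prop :=
  ∀ β₀ ∈ I, ∀ ψ : ℝ → ℝ, ContDiffAt ℝ 2 ψ β₀ →
    (∀ᶠ β in nhdsWithin β₀ I, ψ β ≤ u β) → ψ β₀ = u β₀ →
    ψ β₀ * (1 + (deriv ψ β₀ / ((n : ℝ) - 1)) ^ 2) ^ (((n : ℝ) - 1) / 2) ≥ 1 / lam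

noncomputable def profileOperator (m y y' : ℝ) : ℝ :=
  y * (1 + (y' / (m - 1)) ^ 2) ^ ((m - 1) / 2)

lemma one_add_mul_sq_le {a c d : ℝ} (hca : |c| ≤ a) (ha : 1 ≤ a) :
    1 + (c * d) ^ 2 ≤ a ^ 2 * (1 + d ^ 2) := by
  have hc2 : c ^ 2 ≤ a ^ 2 := sq_le_sq.mpr (hca.trans (le_abs_self a))
  nlinarith [sq_nonneg d]

lemma profileOperator_const_mul_le {m a c y y' : ℝ} (hm : 1 ≤ m) (hc : 0 ≤ c) (hca : c ≤ a)
    (ha : 1 ≤ a) (hy : 0 ≤ y) :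
    profileOperator m (c * y) (c * y') ≤ c * a ^ (m - 1) * profileOperator m y y' := by
  set d := y' / (m - 1)
  set p := (m - 1) / 2
  have hp : 0 ≤ p := by simp only [p]; linarith
  have hslope : c * y' / (m - 1) = c * d := mul_div_assoc c y' (m - 1)
  have hpow : (a ^ 2) ^ p = a ^ (m - 1) := by
    rw [← Real.rpow_natCast, ← Real.rpow_mul (by linarith)]
    congr 1
    simp only [p]
    ring
  have hbound : (1 + (c * d) ^ 2) ^ p ≤ a ^ (m - 1) * (1 + d ^ 2) ^ p := by
    rw [← hpow, ← Real.mul_rpow (by positivity) (by positivity)]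
    exact Real.rpow_le_rpow (by positivity) (one_add_mul_sq_le (by rwa [abs_of_nonneg hc]) ha) hp
  calc profileOperator m (c * y) (c * y')
      = c * y * (1 + (c * d) ^ 2) ^ p := by rw [profileOperator, hslope]
    _ ≤ c * y * (a ^ (m - 1) * (1 + d ^ 2) ^ p) := by gcongr
    _ = c * a ^ (m - 1) * profileOperator m y y' := by rw [profileOperator]; ring

lemma eventually_div_mul_le_of_div_le {l : Filter ℝ} {f g : ℝ → ℝ} {a x : ℝ} (ha : 0 < a)
    (hgx : 0 < g x) (hg : ∀ᶠ y in l, 0 < g y)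
    (h : ∀ᶠ y in l, f x / (a * g x) ≤ f y / (a * g y)) :
    ∀ᶠ y in l, f x / g x * g y ≤ f y := by
  filter_upwards [h, hg] with y hy hgy
  rw [div_mul_eq_div_div_swap, div_mul_eq_div_div_swap, div_le_div_iff_of_pos_right ha,
    div_le_div_iff₀ hgx hgy] at hy
  rwa [div_mul_eq_mul_div, div_le_iff₀ hgx]

lemma IsViscositySupersolution1.inv_le_profileOperator_const_mul {n : ℕ} {lam : ℝ} {I : Set ℝ}
    {u φ : ℝ → ℝ} (hu : IsViscositySupersolution1 n lam I u) {β₀ c : ℝ} (hβ₀ : β₀ ∈ I)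
    (hφ : ContDiffAt ℝ 2 φ β₀) (hle : ∀ᶠ β in nhdsWithin β₀ I, c * φ β ≤ u β)
    (htouch : c * φ β₀ = u β₀) :
    1 / lam ≤ profileOperator n (c * φ β₀) (c * deriv φ β₀) := by
  have hderiv : deriv (fun β => c * φ β) β₀ = c * deriv φ β₀ :=
    deriv_const_mul c (hφ.differentiableAt two_ne_zero)
  have := hu β₀ hβ₀ (fun β => c * φ β) (contDiffAt_const.mul hφ) hle htouch
  rwa [hderiv] at this

theorem no_local_min_of_scaled_ratio_below_one_general
    (n : ℕ) (hn : 2 ≤ n) (γ lam : ℝ) (hlam : 0 < lam) (hγlam : lam ≤ γ)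
    (α : ℝ) (hα : α = (γ / lam) ^ ((1 : ℝ) / (n : ℝ)))
    (I : Set ℝ)
    (u φ : ℝ → ℝ)
    (hφ_pos : ∀ β ∈ I, 0 < φ β)
    (hφ_C2 : ∀ β ∈ I, ContDiffAt ℝ 2 φ β)
    (hφ_eq : ∀ β ∈ I, φ β * (1 + (deriv φ β / ((n : ℝ) - 1)) ^ 2) ^ (((n : ℝ) - 1) / 2)
      = 1 / γ)
    (hu_visc : IsViscositySupersolution1 n lam I u) :
    ¬ ∃ β₀ ∈ I, u β₀ / (α * φ β₀) < 1 ∧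
      ∀ᶠ β in nhdsWithin β₀ I, u β₀ / (α * φ β₀) ≤ u β / (α * φ β) := by
  rintro ⟨β₀, hβ₀, hlt, hmin⟩
  have hφ₀ := hφ_pos β₀ hβ₀
  have hγ : 0 < γ := hlam.trans_le hγlam
  have hratio : 1 ≤ γ / lam := (one_le_div hlam).mpr hγlam
  have hα₁ : 1 ≤ α := hα ▸ Real.one_le_rpow hratio (by positivity)
  have hαn : α * α ^ ((n : ℝ) - 1) = γ / lam := by
    rw [Real.rpow_sub_one (by positivity), mul_div_cancel₀ _ (by positivity), Real.rpow_natCast,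
      hα, one_div, Real.rpow_inv_natCast_pow (by positivity) (by omega)]
  set c := u β₀ / φ β₀
  have hcα : c < α := by rwa [div_mul_eq_div_div_swap, div_lt_one (by positivity)] at hlt
  have hvisc : 1 / lam ≤ profileOperator n (c * φ β₀) (c * deriv φ β₀) :=
    hu_visc.inv_le_profileOperator_const_mul hβ₀ (hφ_C2 β₀ hβ₀)
      (eventually_div_mul_le_of_div_le (by positivity) hφ₀
        (eventually_nhdsWithin_of_forall hφ_pos) hmin) (div_mul_cancel₀ _ hφ₀.ne')
  -- `1 / lam > 0` bounds `c φ(β₀) · (positive)` from below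
  have hc : 0 < c := pos_of_mul_pos_left
    (pos_of_mul_pos_left ((one_div_pos.mpr hlam).trans_le hvisc) (by positivity)) hφ₀.le
  have hn₁ : (1 : ℝ) ≤ n := by exact_mod_cast (by omega : 1 ≤ n)
  have : 1 / lam < 1 / lam := calc
    1 / lam ≤ profileOperator n (c * φ β₀) (c * deriv φ β₀) := hvisc
    _ ≤ c * α ^ ((n : ℝ) - 1) * (1 / γ) :=
      hφ_eq β₀ hβ₀ ▸ profileOperator_const_mul_le hn₁ hc.le hcα.le hα₁ hφ₀.le
    _ < α * α ^ ((n : ℝ) - 1) * (1 / γ) := by gcongr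
    _ = 1 / lam := by rw [hαn]; field_simp
  exact lt_irrefl _ this

theorem no_local_min_of_scaled_ratio_below_one
    (n : ℕ) (hn : 2 ≤ n) (γ lam : ℝ) (hlam : 0 < lam) (hγlam : lam ≤ γ)
    (α : ℝ) (hα : α = (γ / lam) ^ ((1 : ℝ) / (n : ℝ)))
    (I : Set ℝ) (hIopen : IsOpen I) (hIconn : I.OrdConnected)
    (u φ : ℝ → ℝ)
    (hφ_pos : ∀ β ∈ I, 0 < φ β)
    (hφ_C2 : ∀ β ∈ I, ContDiffAt ℝ 2 φ β)
    (hφ_eq : ∀ β ∈ I, φ β * (1 + (deriv φ β / ((n : ℝ) - 1)) ^ 2) ^ (((n : ℝ) - 1) / 2)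
      = 1 / γ)
    (hu_cont : ContinuousOn u I) (hu_pos : ∀ β ∈ I, 0 < u β)
    (hu_visc : IsViscositySupersolution1 n lam I u) :
    ¬ ∃ β₀ ∈ I, u β₀ / (α * φ β₀) < 1 ∧
      ∀ᶠ β in nhdsWithin β₀ I, u β₀ / (α * φ β₀) ≤ u β / (α * φ β) :=
  no_local_min_of_scaled_ratio_below_one_general n hn γ lam hlam hγlam α hα I u φ hφ_pos hφ_C2 hφ_eq
    hu_visc
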